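/- Let σ > 0, m ∈ ℝ, and let ℓ(y|m,σ) = (2πσ²)^{−1/2} exp(−(y−m)²/(2σ²)) be the N(m,σ²) density. For a nonnegative integer j, let ρ_j = ∫_{−∞}^{∞} [ (∂^j ℓ(y|m,σ)/∂m^j) / ℓ(y|m,σ) ] · [ ∂ log ℓ(y|m,σ)/∂σ ] · ℓ(y|m,σ) dy. Then ρ_j = 1{j = 2} · 2/σ³. -/

import Mathlib

noncomputable section

/-- The `N(m,σ²)` density `ℓ(y|m,σ) = (2πσ²)^{-1/2} exp(-(y-m)²/(2σ²))`. -/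
def gpdf (m σ y : ℝ) : ℝ :=
  (Real.sqrt (2 * Real.pi * σ ^ 2))⁻¹ * Real.exp (-(y - m) ^ 2 / (2 * σ ^ 2))

/-!
With `z = (y - m) / σ` the density is `ℓ = (σ √(2π))⁻¹ e^{-z²/2}`. Rodrigues' formula for the
probabilists' Hermite polynomials `Heⱼ` gives `∂ʲℓ/∂mʲ = σ⁻ʲ Heⱼ(z) ℓ`, and
`∂ log ℓ/∂σ = σ⁻¹ (z² - 1) = σ⁻¹ He₂(z)`. After the substitution `y ↦ z`,
`ρⱼ = σ^{-j-1} (2π)^{-1/2} ∫ Heⱼ He₂ e^{-z²/2} dz`, and the orthogonality relation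
`∫ Heᵢ Heⱼ e^{-z²/2} dz = δᵢⱼ i! √(2π)`, obtained by integrating by parts `j` times against
`dʲ/dzʲ e^{-z²/2} = (-1)ʲ Heⱼ(z) e^{-z²/2}`, finishes the computation.
-/

open Polynomial MeasureTheory Real
open scoped Nat

lemma neg_one_pow_mul_neg_one_pow {M : Type*} [Monoid M] [HasDistribNeg M] (n : ℕ) :
    ((-1 : M) ^ n) * (-1) ^ n = 1 := by
  rw [← pow_add, ← two_mul, pow_mul, neg_one_sq, one_pow]

lemma integral_comp_sub_div_eq_abs_smul {E : Type*} [NormedAddCommGroup E] [NormedSpace ℝ E]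
    (f : ℝ → E) (m σ : ℝ) : ∫ y, f ((y - m) / σ) = |σ| • ∫ z, f z := by
  rw [integral_sub_right_eq_self (fun y => f (y / σ)) m, Measure.integral_comp_div]

def hermiteWeight (x : ℝ) : ℝ := exp (-(x ^ 2 / 2))

lemma contDiff_hermiteWeight : ContDiff ℝ ⊤ hermiteWeight := by
  unfold hermiteWeight
  fun_prop

lemma iterate_deriv_hermiteWeight (n : ℕ) (x : ℝ) :
    deriv^[n] hermiteWeight x = (-1) ^ n * aeval x (hermite n) * hermiteWeight x :=
  deriv_gaussian_eq_hermite_mul_gaussian n x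

lemma hasDerivAt_iterate_deriv_hermiteWeight (k : ℕ) (x : ℝ) :
    HasDerivAt (deriv^[k] hermiteWeight) (deriv^[k + 1] hermiteWeight x) x := by
  rw [Function.iterate_succ_apply', ← iteratedDeriv_eq_iterate]
  exact (contDiff_hermiteWeight.differentiable_iteratedDeriv k (by simp)).differentiableAt
    |>.hasDerivAt

lemma integral_hermiteWeight : ∫ x, hermiteWeight x = √(2 * π) := by
  simp only [hermiteWeight]
  convert integral_gaussian (1 / 2) using 3 <;> ring_nf

section IntegrationByParts

variable {R : Type*} [CommRing R] [Algebra R ℝ]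

lemma integrable_aeval_mul_hermiteWeight (P : R[X]) :
    Integrable fun x => aeval x P * hermiteWeight x := by
  induction P using Polynomial.induction_on' with
  | add P Q hP hQ =>
    simp only [map_add, add_mul]
    exact hP.add hQ
  | monomial n a =>
    have h := integrable_rpow_mul_exp_neg_mul_sq (b := 1 / 2) (by norm_num) (s := n)
      (neg_one_lt_zero.trans_le n.cast_nonneg)
    convert h.const_mul (algebraMap R ℝ a) using 2 with x
    simp only [aeval_monomial, rpow_natCast, hermiteWeight]
    ring_nf

lemma integrable_aeval_mul_iterate_deriv_hermiteWeight (P : R[X]) (k : ℕ) :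
    Integrable fun x => aeval x P * deriv^[k] hermiteWeight x := by
  convert (integrable_aeval_mul_hermiteWeight (P * (hermite k).map (algebraMap ℤ R))).const_mul
    ((-1) ^ k) using 2 with x
  rw [iterate_deriv_hermiteWeight, map_mul, aeval_map_algebraMap]
  ring

lemma integral_aeval_mul_iterate_deriv_hermiteWeight (P : R[X]) (k : ℕ) :
    ∫ x, aeval x P * deriv^[k] hermiteWeight x
      = (-1) ^ k * ∫ x, aeval x (derivative^[k] P) * hermiteWeight x := by
  induction k generalizing P with
  | zero => simp
  | succ k ih =>
    rw [integral_mul_deriv_eq_deriv_mul_of_integrable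
        (fun x _ => P.hasDerivAt_aeval x) (fun x _ => hasDerivAt_iterate_deriv_hermiteWeight k x)
        (integrable_aeval_mul_iterate_deriv_hermiteWeight P (k + 1))
        (integrable_aeval_mul_iterate_deriv_hermiteWeight (derivative P) k)
        (integrable_aeval_mul_iterate_deriv_hermiteWeight P k),
      ih, Function.iterate_succ_apply]
    ring

end IntegrationByParts

lemma iterate_derivative_hermite_self (n : ℕ) : derivative^[n] (hermite n) = C (n ! : ℤ) := by
  ext m
  rw [coeff_iterate_derivative, coeff_C]
  rcases m.eq_zero_or_pos with rfl | hm
  · simp [coeff_hermite_self, Nat.descFactorial_self]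
  · simp [coeff_hermite_of_lt (by omega : n < m + n), hm.ne']

theorem integral_hermite_mul_hermite_mul_hermiteWeight (i j : ℕ) :
    ∫ x, aeval x (hermite i) * aeval x (hermite j) * hermiteWeight x
      = if i = j then i ! * √(2 * π) else 0 := by
  wlog hij : i ≤ j generalizing i j
  · simp_rw [mul_comm (aeval _ (hermite i)), this j i (by omega), eq_comm (a := j)]
    split_ifs with h <;> simp [h]
  have hrodrigues : ∀ x, aeval x (hermite i) * aeval x (hermite j) * hermiteWeight x
      = (-1) ^ j * (aeval x (hermite i) * deriv^[j] hermiteWeight x) := by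
    intro x
    rw [iterate_deriv_hermiteWeight]
    linear_combination (-(aeval x (hermite i) * aeval x (hermite j) * hermiteWeight x)) *
      neg_one_pow_mul_neg_one_pow (M := ℝ) j
  simp_rw [hrodrigues, integral_const_mul, integral_aeval_mul_iterate_deriv_hermiteWeight,
    ← mul_assoc, neg_one_pow_mul_neg_one_pow, one_mul]
  rcases hij.lt_or_eq with hlt | rfl
  · rw [iterate_derivative_eq_zero (natDegree_hermite.trans_lt hlt), if_neg hlt.ne]
    simp
  · simp [iterate_derivative_hermite_self, integral_const_mul, integral_hermiteWeight]

lemma aeval_hermite_two (x : ℝ) : aeval x (hermite 2) = x ^ 2 - 1 := by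
  simp [hermite_succ]
  ring

lemma gpdf_eq (m σ y : ℝ) :
    gpdf m σ y = (√(2 * π * σ ^ 2))⁻¹ * hermiteWeight ((y - m) / σ) := by
  rw [gpdf, hermiteWeight, div_pow]
  ring_nf

lemma gpdf_pos {σ : ℝ} (hσ : σ ≠ 0) (m y : ℝ) : 0 < gpdf m σ y := by
  have : 0 < √(2 * π * σ ^ 2) := sqrt_pos.mpr (by positivity)
  rw [gpdf]
  positivity

lemma iteratedDeriv_gpdf_mean (m σ y : ℝ) (j : ℕ) :
    iteratedDeriv j (fun m' => gpdf m' σ y) m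
      = σ⁻¹ ^ j * aeval ((y - m) / σ) (hermite j) * gpdf m σ y := by
  have hscale : iteratedDeriv j (fun t => hermiteWeight (σ⁻¹ * t))
      = fun t => σ⁻¹ ^ j * deriv^[j] hermiteWeight (σ⁻¹ * t) := by
    rw [iteratedDeriv_comp_const_mul (contDiff_hermiteWeight.of_le le_top),
      iteratedDeriv_eq_iterate]
  simp_rw [gpdf_eq, div_eq_inv_mul _ σ, iteratedDeriv_const_mul_field]
  rw [iteratedDeriv_comp_const_sub j (fun t => hermiteWeight (σ⁻¹ * t)), hscale]
  simp only [smul_eq_mul, iterate_deriv_hermiteWeight]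
  set z := σ⁻¹ * (y - m)
  linear_combination (√(2 * π * σ ^ 2))⁻¹ * σ⁻¹ ^ j * aeval z (hermite j) * hermiteWeight z *
    neg_one_pow_mul_neg_one_pow (M := ℝ) j

lemma deriv_log_gpdf_scale {σ : ℝ} (hσ : 0 < σ) (m y : ℝ) :
    deriv (fun σ' => log (gpdf m σ' y)) σ = σ⁻¹ * aeval ((y - m) / σ) (hermite 2) := by
  have hlog : (fun σ' => log (gpdf m σ' y)) =ᶠ[nhds σ]
      fun σ' => -log √(2 * π) - log σ' - (y - m) ^ 2 / 2 * (σ' ^ 2)⁻¹ := by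
    filter_upwards [eventually_gt_nhds hσ] with σ' hσ'
    have hsqrt : √(2 * π * σ' ^ 2) = √(2 * π) * σ' := by
      rw [sqrt_mul (by positivity), sqrt_sq hσ'.le]
    rw [gpdf, log_mul (by positivity) (exp_pos _).ne', log_exp, hsqrt, log_inv,
      log_mul (by positivity) hσ'.ne']
    field_simp
    ring
  have hderiv : HasDerivAt (fun σ' => -log √(2 * π) - log σ' - (y - m) ^ 2 / 2 * (σ' ^ 2)⁻¹)
      (σ⁻¹ * (((y - m) / σ) ^ 2 - 1)) σ := by
    refine (((hasDerivAt_const σ _).sub (hasDerivAt_log hσ.ne')).sub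
      (((hasDerivAt_pow 2 σ).inv (by positivity)).const_mul _)).congr_deriv ?_
    field_simp
    ring
  rw [hlog.deriv_eq, hderiv.deriv, aeval_hermite_two]

/-- **Cross moment of the Bhattacharyya basis with the scale score.**
For `Y ∼ N(m,σ²)` and a nonnegative integer `j`,
`ρ_j = ∫ [(∂ʲℓ/∂mʲ)/ℓ] · [∂ log ℓ/∂σ] · ℓ dy = 1{j = 2} · 2/σ³`. -/
theorem stmt5 (m σ : ℝ) (hσ : 0 < σ) (j : ℕ) :
    (∫ y : ℝ, (iteratedDeriv j (fun m' => gpdf m' σ y) m / gpdf m σ y)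
        * deriv (fun σ' => Real.log (gpdf m σ' y)) σ * gpdf m σ y)
    = if j = 2 then 2 / σ ^ 3 else 0 := by
  set c := (√(2 * π * σ ^ 2))⁻¹
  set F := fun z => aeval z (hermite j) * aeval z (hermite 2) * hermiteWeight z
  have hintegrand : ∀ y, (iteratedDeriv j (fun m' => gpdf m' σ y) m / gpdf m σ y)
        * deriv (fun σ' => log (gpdf m σ' y)) σ * gpdf m σ y
      = σ⁻¹ ^ (j + 1) * c * F ((y - m) / σ) := by
    intro y
    rw [iteratedDeriv_gpdf_mean, mul_div_cancel_right₀ _ (gpdf_pos hσ.ne' m y).ne',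
      deriv_log_gpdf_scale hσ, gpdf_eq]
    ring
  rw [integral_congr_ae (.of_forall hintegrand), integral_const_mul,
    integral_comp_sub_div_eq_abs_smul F, abs_of_pos hσ, smul_eq_mul,
    integral_hermite_mul_hermite_mul_hermiteWeight]
  split_ifs with hj
  · have hsqrt : √(2 * π * σ ^ 2) = √(2 * π) * σ := by
      rw [sqrt_mul (by positivity), sqrt_sq hσ.le]
    subst hj
    simp only [c, hsqrt, Nat.reduceAdd, Nat.factorial_two, Nat.cast_ofNat]
    field_simp
  · simp

end
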